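/- arXiv:math/0606644 — 3 statements merged into one kernel-verified Lean document; each statement's English description precedes it below -/
import Mathlib

section
/- Let k ≥ 2 be an integer. Define a relation ≈ on ℂ³ by: (a,b,c) ≈ (a',b',c') iff there exist nonzero complex numbers q, r, u such that a' = q^{k-2}·r·a, b' = q^{k}·u^{-1}·b, and c' = q^{k-2}·r·c. Then: (i) every triple (a,b,c) ∈ ℂ³ \ {(0,0,0)} satisfying b·(k·a − c) = 0 is ≈-related to a triple of the form (λ, 0, μ) with (λ,μ) ≠ (0,0), or to (0,1,0), or to (1,1,k); (ii) (λ,0,μ) ≈ (λ',0,μ') if and only if there is a nonzero c ∈ ℂ with λ' = c·λ and μ' = c·μ; (iii) no triple of the form (λ,0,μ) with (λ,μ) ≠ (0,0) is ≈-related to (0,1,0) or to (1,1,k), and (0,1,0) is not ≈-related to (1,1,k). -/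
/-- The equivalence relation on coefficient triples `(a,b,c)` of degree-`k`
codifferentials on `W₋₁ ⊕ W₀ ⊕ W₁` induced by diagonal linear automorphisms
`diag(q,r,u)`. -/
def codiffRel (k : ℤ) (v w : ℂ × ℂ × ℂ) : Prop :=
  ∃ q r u : ℂ, q ≠ 0 ∧ r ≠ 0 ∧ u ≠ 0 ∧
    w.1 = q ^ (k - 2) * r * v.1 ∧
    w.2.1 = q ^ k * u⁻¹ * v.2.1 ∧
    w.2.2 = q ^ (k - 2) * r * v.2.2

theorem classification_of_degree_k_codifferentials (k : ℤ) (hk : 2 ≤ k) :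
    (∀ a b c : ℂ, (a, b, c) ≠ (0, 0, 0) → b * ((k : ℂ) * a - c) = 0 →
      (∃ lam mu : ℂ, (lam, mu) ≠ (0, 0) ∧ codiffRel k (a, b, c) (lam, 0, mu)) ∨
      codiffRel k (a, b, c) (0, 1, 0) ∨
      codiffRel k (a, b, c) (1, 1, (k : ℂ))) ∧
    (∀ lam mu lam' mu' : ℂ,
      codiffRel k (lam, 0, mu) (lam', 0, mu') ↔
        ∃ c : ℂ, c ≠ 0 ∧ lam' = c * lam ∧ mu' = c * mu) ∧
    (∀ lam mu : ℂ, (lam, mu) ≠ (0, 0) →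
      ¬ codiffRel k (lam, 0, mu) (0, 1, 0) ∧
      ¬ codiffRel k (lam, 0, mu) (1, 1, (k : ℂ))) ∧
    ¬ codiffRel k (0, 1, 0) (1, 1, (k : ℂ)) := by
  refine ⟨?_, ?_, ?_, ?_⟩
  · intro a b c hne hbc
    by_cases hb : b = 0
    · left
      refine ⟨a, c, ?_, 1, 1, 1, one_ne_zero, one_ne_zero, one_ne_zero,
        by simp, by simp [hb], by simp⟩
      intro h
      exact hne (by simp [Prod.ext_iff] at h ⊢; exact ⟨h.1, hb, h.2⟩)
    · have hc : c = (k : ℂ) * a := by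
        have := (mul_eq_zero.mp hbc).resolve_left hb
        exact (sub_eq_zero.mp this).symm
      by_cases ha : a = 0
      · right; left
        refine ⟨1, 1, b, one_ne_zero, one_ne_zero, hb, by simp [ha], ?_, by simp [hc, ha]⟩
        simp [inv_mul_cancel₀ hb]
      · right; right
        refine ⟨1, a⁻¹, b, one_ne_zero, inv_ne_zero ha, hb, ?_, ?_, ?_⟩
        · simp [inv_mul_cancel₀ ha]
        · simp [inv_mul_cancel₀ hb]
        · simp [hc]; field_simp
  · intro lam mu lam' mu'
    constructor
    · rintro ⟨q, r, u, hq, hr, hu, h1, h2, h3⟩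
      exact ⟨q ^ (k - 2) * r, mul_ne_zero (zpow_ne_zero _ hq) hr, h1, h3⟩
    · rintro ⟨c, hc, h1, h2⟩
      exact ⟨1, c, 1, one_ne_zero, hc, one_ne_zero, by simpa using h1, by simp,
        by simpa using h2⟩
  · intro lam mu _
    constructor
    · rintro ⟨q, r, u, hq, hr, hu, h1, h2, h3⟩
      simp at h2
    · rintro ⟨q, r, u, hq, hr, hu, h1, h2, h3⟩
      simp at h2
  · rintro ⟨q, r, u, hq, hr, hu, h1, h2, h3⟩
    simp at h1
end

section
/- Let k ≥ 2 be an integer and a₁, a₂, b₁, b₂, c₁, c₂ ∈ ℂ satisfy a₁b₂ + a₂b₁ = 0 and a₁c₂ + a₂c₁ = 0, with (a₁, a₂) ≠ (0, 0). Let A be the 3×4 complex matrix with rows (0, a₁, a₂, 0), (b₂, 0, 0, c₂), (b₁, 0, 0, c₁). Then there exist q, r, s, t, u ∈ ℂ with q ≠ 0 and ur − st ≠ 0 such that, with G = [[q,0,0],[0,r,s],[0,t,u]] and Q the 4×4 matrix with rows (q^k, 0, 0, 0), (0, rq^{k-1}, sq^{k-1}, 0), (0, tq^{k-1}, uq^{k-1},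 0), (0, 0, 0, (ur−st)q^{k-2}), the matrix G⁻¹·A·Q has vanishing entries in positions (1,3), (2,1), and (2,4); equivalently, G⁻¹AQ has the form with rows (0, a₁', 0, 0), (0, 0, 0, 0), (b₁', 0, 0, c₁') for some a₁', b₁', c₁' ∈ ℂ. -/
/-!
Take `q = 1` and `(s, u) = (a₂, -a₁)`, the kernel direction of the first row `(a₁, a₂)`, and
complete it by any `(r, t)` with `a₁ r + a₂ t = 1`, so that `u r - s t = -1`. The relations
`a₁ b₂ + a₂ b₁ = 0 = a₁ c₂ + a₂ c₁` say precisely that `(s, u)` also kills the `b`- and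
`c`-columns, and then `G⁻¹ A Q` is read off from the identity `A Q = G M` with `M` in normal form.
-/

namespace CoderivationOneTwo

variable {K : Type*} [Field K]

theorem exists_mul_add_mul_eq_one {a₁ a₂ : K} (ha : (a₁, a₂) ≠ (0, 0)) :
    ∃ r t : K, a₁ * r + a₂ * t = 1 := by
  by_cases h₁ : a₁ = 0
  · have h₂ : a₂ ≠ 0 := fun h₂ => ha (by rw [h₁, h₂])
    exact ⟨0, a₂⁻¹, by simp [h₂]⟩
  · exact ⟨a₁⁻¹, 0, by simp [h₁]⟩

def coderivationMatrix (a₁ a₂ b₁ b₂ c₁ c₂ : K) : Matrix (Fin 3) (Fin 4) K :=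
  !![0, a₁, a₂, 0; b₂, 0, 0, c₂; b₁, 0, 0, c₁]

def autMatrix (q r s t u : K) : Matrix (Fin 3) (Fin 3) K :=
  !![q, 0, 0; 0, r, s; 0, t, u]

/-- The matrix of `S^k(g)` on the basis `e₁^k, e₁^{k-1}e₂, e₁^{k-1}e₃, e₁^{k-2}e₂e₃`. -/
def symPowAutMatrix (k : ℕ) (q r s t u : K) : Matrix (Fin 4) (Fin 4) K :=
  !![q ^ k, 0, 0, 0;
    0, r * q ^ (k - 1), s * q ^ (k - 1), 0;
    0, t * q ^ (k - 1), u * q ^ (k - 1), 0;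
    0, 0, 0, (u * r - s * t) * q ^ (k - 2)]

def degreeOneMatrix (a₁ b₁ c₁ : K) : Matrix (Fin 3) (Fin 4) K :=
  !![0, a₁, 0, 0; 0, 0, 0, 0; b₁, 0, 0, c₁]

theorem det_autMatrix (q r s t u : K) : (autMatrix q r s t u).det = q * (u * r - s * t) := by
  rw [autMatrix, Matrix.det_fin_three]
  simp only [Matrix.of_apply, Matrix.cons_val', Matrix.cons_val_zero, Matrix.cons_val_one,
    Matrix.cons_val_two, Matrix.empty_val', Matrix.cons_val_fin_one, Matrix.head_cons,
    Matrix.tail_cons, Matrix.head_fin_const]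
  ring

theorem coderivationMatrix_mul_symPowAutMatrix_one {a₁ a₂ b₁ b₂ c₁ c₂ r t : K} (k : ℕ)
    (hb : a₁ * b₂ + a₂ * b₁ = 0) (hc : a₁ * c₂ + a₂ * c₁ = 0) (hrt : a₁ * r + a₂ * t = 1) :
    coderivationMatrix a₁ a₂ b₁ b₂ c₁ c₂ * symPowAutMatrix k 1 r a₂ t (-a₁) =
      autMatrix 1 r a₂ t (-a₁) * degreeOneMatrix 1 (t * b₂ - r * b₁) (r * c₁ - t * c₂) := by
  ext i j
  fin_cases i <;> fin_cases j <;>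
    simp only [coderivationMatrix, symPowAutMatrix, autMatrix, degreeOneMatrix, Matrix.mul_apply,
      Fin.sum_univ_succ, Fin.sum_univ_zero, Matrix.of_apply, Matrix.cons_val', Matrix.cons_val_zero,
      Matrix.cons_val_one, Matrix.cons_val_succ, Matrix.cons_val_fin_one, Fin.isValue,
      Fin.reduceFinMk, Matrix.cons_val, one_pow]
  all_goals first
    | linear_combination hrt
    | linear_combination r * hb - b₂ * hrt
    | linear_combination t * hb - b₁ * hrt
    | linear_combination (-r) * hc
    | linear_combination (-t) * hc
    | ring

theorem inv_autMatrix_mul_coderivationMatrix_mul_symPowAutMatrix_one {a₁ a₂ b₁ b₂ c₁ c₂ r t : K}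
    (k : ℕ) (hb : a₁ * b₂ + a₂ * b₁ = 0) (hc : a₁ * c₂ + a₂ * c₁ = 0)
    (hrt : a₁ * r + a₂ * t = 1) :
    (autMatrix 1 r a₂ t (-a₁))⁻¹ * coderivationMatrix a₁ a₂ b₁ b₂ c₁ c₂ *
        symPowAutMatrix k 1 r a₂ t (-a₁) =
      degreeOneMatrix 1 (t * b₂ - r * b₁) (r * c₁ - t * c₂) := by
  have hdet : IsUnit (autMatrix 1 r a₂ t (-a₁)).det := by
    rw [det_autMatrix, show -a₁ * r - a₂ * t = -1 by linear_combination -hrt]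
    norm_num
  rw [Matrix.mul_assoc, coderivationMatrix_mul_symPowAutMatrix_one k hb hc hrt,
    Matrix.nonsing_inv_mul_cancel_left _ _ hdet]

end CoderivationOneTwo

open CoderivationOneTwo in
theorem codifferential_equivalent_to_one_in_degree_one_part_general (k : ℕ)
    (a₁ a₂ b₁ b₂ c₁ c₂ : ℂ)
    (hb : a₁ * b₂ + a₂ * b₁ = 0) (hc : a₁ * c₂ + a₂ * c₁ = 0)
    (ha : (a₁, a₂) ≠ (0, 0)) :
    ∃ q r s t u : ℂ, q ≠ 0 ∧ u * r - s * t ≠ 0 ∧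
      let A : Matrix (Fin 3) (Fin 4) ℂ := !![0, a₁, a₂, 0; b₂, 0, 0, c₂; b₁, 0, 0, c₁]
      let G : Matrix (Fin 3) (Fin 3) ℂ := !![q, 0, 0; 0, r, s; 0, t, u]
      let Q : Matrix (Fin 4) (Fin 4) ℂ := !![q ^ k, 0, 0, 0;
        0, r * q ^ (k - 1), s * q ^ (k - 1), 0;
        0, t * q ^ (k - 1), u * q ^ (k - 1), 0;
        0, 0, 0, (u * r - s * t) * q ^ (k - 2)]
      (G⁻¹ * A * Q) 0 2 = 0 ∧ (G⁻¹ * A * Q) 1 0 = 0 ∧ (G⁻¹ * A * Q) 1 3 = 0 ∧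
      ∃ a₁' b₁' c₁' : ℂ,
        G⁻¹ * A * Q = !![0, a₁', 0, 0; 0, 0, 0, 0; b₁', 0, 0, c₁'] := by
  obtain ⟨r, t, hrt⟩ := exists_mul_add_mul_eq_one ha
  have hdet : -a₁ * r - a₂ * t = -1 := by linear_combination -hrt
  refine ⟨1, r, a₂, t, -a₁, one_ne_zero, by rw [hdet]; norm_num, ?_⟩
  intro A G Q
  rw [show G⁻¹ * A * Q = _ from
    inv_autMatrix_mul_coderivationMatrix_mul_symPowAutMatrix_one k hb hc hrt]
  exact ⟨rfl, rfl, rfl, _, _, _, rfl⟩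

theorem codifferential_equivalent_to_one_in_degree_one_part (k : ℕ) (hk : 2 ≤ k)
    (a₁ a₂ b₁ b₂ c₁ c₂ : ℂ)
    (hb : a₁ * b₂ + a₂ * b₁ = 0) (hc : a₁ * c₂ + a₂ * c₁ = 0)
    (ha : (a₁, a₂) ≠ (0, 0)) :
    ∃ q r s t u : ℂ, q ≠ 0 ∧ u * r - s * t ≠ 0 ∧
      let A : Matrix (Fin 3) (Fin 4) ℂ := !![0, a₁, a₂, 0; b₂, 0, 0, c₂; b₁, 0, 0, c₁]
      let G : Matrix (Fin 3) (Fin 3) ℂ := !![q, 0, 0; 0, r, s; 0, t, u]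
      let Q : Matrix (Fin 4) (Fin 4) ℂ := !![q ^ k, 0, 0, 0;
        0, r * q ^ (k - 1), s * q ^ (k - 1), 0;
        0, t * q ^ (k - 1), u * q ^ (k - 1), 0;
        0, 0, 0, (u * r - s * t) * q ^ (k - 2)]
      (G⁻¹ * A * Q) 0 2 = 0 ∧ (G⁻¹ * A * Q) 1 0 = 0 ∧ (G⁻¹ * A * Q) 1 3 = 0 ∧
      ∃ a₁' b₁' c₁' : ℂ,
        G⁻¹ * A * Q = !![0, a₁', 0, 0; 0, 0, 0, 0; b₁', 0, 0, c₁'] :=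
  codifferential_equivalent_to_one_in_degree_one_part_general k a₁ a₂ b₁ b₂ c₁ c₂ hb hc ha
end

section
/- Let k ≥ 2 be an integer, let a₁, b₁, c₁ ∈ ℂ with (a₁, b₁, c₁) ≠ (0, 0, 0), and let q, r, s, t, u ∈ ℂ with q ≠ 0 and ur − st ≠ 0. Let A be the 3×4 complex matrix with rows (0, a₁, 0, 0), (0, 0, 0, 0), (b₁, 0, 0, c₁), let G = [[q,0,0],[0,r,s],[0,t,u]], and let Q be the 4×4 matrix with rows (q^k,0,0,0), (0, rq^{k-1}, sq^{k-1}, 0), (0, tq^{k-1}, uq^{k-1}, 0), (0,0,0,(ur−st)q^{k-2}). Then the entries of G⁻¹·A·Q in positions (1,3), (2,1), and (2,4) all vanish if and only if s = 0. -/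
/-! Since `G` is block diagonal, the row of `G⁻¹` with index `1` is `(0, u, -s) / (ur - st)`;
together with the sparsity of `A` and `Q` this makes the three entries nonzero multiples of
`s a₁`, `s b₁` and `s c₁`, and not all of `a₁, b₁, c₁` vanish. -/

theorem inv_fin_three_blockDiag_one_two {K : Type*} [Field K] (q r s t u : K) (hq : q ≠ 0)
    (hdet : u * r - s * t ≠ 0) :
    (!![q, 0, 0; 0, r, s; 0, t, u] : Matrix (Fin 3) (Fin 3) K)⁻¹ =
      !![q⁻¹, 0, 0;
        0, u / (u * r - s * t), -s / (u * r - s * t);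
        0, -t / (u * r - s * t), r / (u * r - s * t)] := by
  refine Matrix.inv_eq_right_inv ?_
  rw [Matrix.mul_fin_three, Matrix.one_fin_three]
  congr 5 <;> grind

theorem mul_eq_zero_triple_iff_of_ne_zero {M₀ : Type*} [MulZeroClass M₀] [NoZeroDivisors M₀]
    {a b c : M₀} (h : (a, b, c) ≠ (0, 0, 0)) (s : M₀) :
    (s * a = 0 ∧ s * b = 0 ∧ s * c = 0) ↔ s = 0 := by
  refine ⟨fun ⟨ha, hb, hc⟩ => ?_, fun hs => by simp [hs]⟩
  by_contra hs
  simp only [mul_eq_zero, hs, false_or] at ha hb hc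
  exact h (by simp [ha, hb, hc])

theorem automorphism_preserves_degree_one_part_iff_general (k : ℕ)
    (a₁ b₁ c₁ : ℂ) (h : (a₁, b₁, c₁) ≠ (0, 0, 0))
    (q r s t u : ℂ) (hq : q ≠ 0) (hdet : u * r - s * t ≠ 0) :
    let A : Matrix (Fin 3) (Fin 4) ℂ := !![0, a₁, 0, 0; 0, 0, 0, 0; b₁, 0, 0, c₁]
    let G : Matrix (Fin 3) (Fin 3) ℂ := !![q, 0, 0; 0, r, s; 0, t, u]
    let Q : Matrix (Fin 4) (Fin 4) ℂ := !![q ^ k, 0, 0, 0;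
      0, r * q ^ (k - 1), s * q ^ (k - 1), 0;
      0, t * q ^ (k - 1), u * q ^ (k - 1), 0;
      0, 0, 0, (u * r - s * t) * q ^ (k - 2)]
    ((G⁻¹ * A * Q) 0 2 = 0 ∧ (G⁻¹ * A * Q) 1 0 = 0 ∧ (G⁻¹ * A * Q) 1 3 = 0) ↔ s = 0 := by
  intro A G Q
  have entries :
      ((G⁻¹ * A * Q) 0 2 = 0 ∧ (G⁻¹ * A * Q) 1 0 = 0 ∧ (G⁻¹ * A * Q) 1 3 = 0) ↔
        (s * a₁ = 0 ∧ s * b₁ = 0 ∧ s * c₁ = 0) := by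
    simp [G, A, Q, inv_fin_three_blockDiag_one_two q r s t u hq hdet, Matrix.mul_apply,
      Fin.sum_univ_succ, hq, hdet]
    tauto
  rw [entries, mul_eq_zero_triple_iff_of_ne_zero h]

theorem automorphism_preserves_degree_one_part_iff (k : ℕ) (hk : 2 ≤ k)
    (a₁ b₁ c₁ : ℂ) (h : (a₁, b₁, c₁) ≠ (0, 0, 0))
    (q r s t u : ℂ) (hq : q ≠ 0) (hdet : u * r - s * t ≠ 0) :
    let A : Matrix (Fin 3) (Fin 4) ℂ := !![0, a₁, 0, 0; 0, 0, 0, 0; b₁, 0, 0, c₁]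
    let G : Matrix (Fin 3) (Fin 3) ℂ := !![q, 0, 0; 0, r, s; 0, t, u]
    let Q : Matrix (Fin 4) (Fin 4) ℂ := !![q ^ k, 0, 0, 0;
      0, r * q ^ (k - 1), s * q ^ (k - 1), 0;
      0, t * q ^ (k - 1), u * q ^ (k - 1), 0;
      0, 0, 0, (u * r - s * t) * q ^ (k - 2)]
    ((G⁻¹ * A * Q) 0 2 = 0 ∧ (G⁻¹ * A * Q) 1 0 = 0 ∧ (G⁻¹ * A * Q) 1 3 = 0) ↔ s = 0 :=
  automorphism_preserves_degree_one_part_iff_general k a₁ b₁ c₁ h q r s t u hq hdet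
end
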